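/- arXiv:1208.6038 — 9 statements merged into one kernel-verified Lean document; each statement's English description precedes it below -/
import Mathlib

section
/- In a multiplicative left Hom-Leibniz algebra (L, ·, α), with [x,y] := x·y − y·x, the identity [x,y]·α(z) = 2 (x·y)·α(z) holds for all x, y, z in L. -/
/-- [x,y]·α(z) = 2 (x·y)·α(z) in a multiplicative left Hom-Leibniz algebra. -/
theorem stmt_3 {K L : Type*} [Field K] [CharZero K] [AddCommGroup L] [Module K L]
    (m : L →ₗ[K] L →ₗ[K] L) (α : L →ₗ[K] L)
    (mult : ∀ x y : L, α (m x y) = m (α x) (α y))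
    (leib : ∀ x y z : L, m (α x) (m y z) = m (m x y) (α z) + m (α y) (m x z)) :
    ∀ x y z : L, m (m x y - m y x) (α z) = (2 : K) • m (m x y) (α z) := by
  intro x y z
  have h1 := leib x y z
  have h2 := leib y x z
  rw [h2] at h1
  have key : m (m y x) (α z) = - m (m x y) (α z) := by
    rw [← add_assoc] at h1
    have h3 : m (m x y) (α z) + m (m y x) (α z) = 0 := right_eq_add.mp h1
    rw [add_comm] at h3
    exact eq_neg_of_add_eq_zero_left h3
  rw [map_sub, LinearMap.sub_apply, key, two_smul]
  abel
end

section
/- In a multiplicative left Hom-Leibniz algebra (L, ·, α), with [x,y] := x·y − y·x and {x,y,z} := −(x·y)·α(z), the cyclic identity ∑_{cyclic x,y,z} ( [[x,y], α(z)] + {x,y,z} ) = 0 holds, i.e. [[x,y],α(z)] + [[y,z],α(x)] + [[z,x],α(y)] = (x·y)·α(z) + (y·z)·α(x) + (z·x)·α(y). -/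
/-- Cyclic identity (HLY5) for the natural Hom-LY structure on a multiplicative
    left Hom-Leibniz algebra. -/
theorem stmt_5 {K L : Type*} [Field K] [CharZero K] [AddCommGroup L] [Module K L]
    (m : L →ₗ[K] L →ₗ[K] L) (α : L →ₗ[K] L)
    (mult : ∀ x y : L, α (m x y) = m (α x) (α y))
    (leib : ∀ x y z : L, m (α x) (m y z) = m (m x y) (α z) + m (α y) (m x z))
    (b : L → L → L) (hb : ∀ x y, b x y = m x y - m y x) :
    ∀ x y z : L,
      b (b x y) (α z) + b (b y z) (α x) + b (b z x) (α y) =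
        m (m x y) (α z) + m (m y z) (α x) + m (m z x) (α y) := by
  have hkey : ∀ x y z : L, m (m x y) (α z) + m (m y x) (α z) = 0 := by
    intro x y z
    have h1 := leib x y z
    have h2 := leib y x z
    linear_combination (norm := module) -h1 - h2
  intro x y z
  simp only [hb, map_sub, LinearMap.sub_apply]
  linear_combination (norm := module) (- leib z x y - leib x y z - leib y z x
    - hkey x y z - hkey y z x - hkey z x y)
end

section
/- In a multiplicative left Hom-Leibniz algebra (L, ·, α), with [x,y] := x·y − y·x and {x,y,z} := −(x·y)·α(z), the cyclic sum {[x,y], α(z), α(u)} + {[y,z], α(x), α(u)} + {[z,x], α(y), α(u)} = 0 holds for all x, y, z, u in L. -/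
/-- Cyclic identity (HLY6) for the natural Hom-LY structure on a multiplicative
    left Hom-Leibniz algebra. -/
theorem stmt_6 {K L : Type*} [Field K] [CharZero K] [AddCommGroup L] [Module K L]
    (m : L →ₗ[K] L →ₗ[K] L) (α : L →ₗ[K] L)
    (mult : ∀ x y : L, α (m x y) = m (α x) (α y))
    (leib : ∀ x y z : L, m (α x) (m y z) = m (m x y) (α z) + m (α y) (m x z))
    (b : L → L → L) (hb : ∀ x y, b x y = m x y - m y x)
    (t : L → L → L → L) (ht : ∀ x y z, t x y z = - m (m x y) (α z)) :
    ∀ x y z u : L,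
      t (b x y) (α z) (α u) + t (b y z) (α x) (α u) + t (b z x) (α y) (α u) = 0 := by
  have key : ∀ a c d : L, m (m a c) (α d) = m (α a) (m c d) - m (α c) (m a d) := by
    intro a c d
    rw [leib a c d]; abel
  have key2 : ∀ a c e f : L,
      m (m a c) (m (α e) (α f)) = m (α a) (m c (m e f)) - m (α c) (m a (m e f)) := by
    intro a c e f
    rw [← mult e f, key]
  intro x y z u
  simp only [ht, hb, map_sub, map_add, LinearMap.sub_apply, LinearMap.add_apply,
    key, key2, mult]
  abel
end

section
/- In a multiplicative left Hom-Leibniz algebra (L, ·, α), with [x,y] := x·y − y·x and {x,y,z} := −(x·y)·α(z), the identity {α(x), α(y), [u,v]} = [{x,y,u}, α²(v)] + [α²(u), {x,y,v}] holds for all x, y, u, v in L. -/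
/-- Identity (HLY7) for the natural Hom-LY structure on a multiplicative
    left Hom-Leibniz algebra. -/
theorem stmt_7 {K L : Type*} [Field K] [CharZero K] [AddCommGroup L] [Module K L]
    (m : L →ₗ[K] L →ₗ[K] L) (α : L →ₗ[K] L)
    (mult : ∀ x y : L, α (m x y) = m (α x) (α y))
    (leib : ∀ x y z : L, m (α x) (m y z) = m (m x y) (α z) + m (α y) (m x z))
    (b : L → L → L) (hb : ∀ x y, b x y = m x y - m y x)
    (t : L → L → L → L) (ht : ∀ x y z, t x y z = - m (m x y) (α z)) :
    ∀ x y u v : L,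
      t (α x) (α y) (b u v) = b (t x y u) (α (α v)) + b (α (α u)) (t x y v) := by
  intro x y u v
  have h1 := leib (m x y) (α u) (α v)
  have h2 := leib (m x y) (α v) (α u)
  rw [mult] at h1 h2
  simp only [hb, ht, map_sub, map_neg, mult, LinearMap.sub_apply, LinearMap.neg_apply,
    map_add]
  rw [h1, h2]
  abel
end

section
/- In a multiplicative left Hom-Leibniz algebra (L, ·, α), with {x,y,z} := −(x·y)·α(z), the identity {α²(x), α²(y), {u,v,w}} = {{x,y,u}, α²(v), α²(w)} + {α²(u), {x,y,v}, α²(w)} + {α²(u), α²(v), {x,y,w}} holds for all x, y, u, v, w in L. -/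
/-- Identity (HLY8) for the natural Hom-LY structure on a multiplicative
    left Hom-Leibniz algebra. -/
theorem stmt_8 {K L : Type*} [Field K] [CharZero K] [AddCommGroup L] [Module K L]
    (m : L →ₗ[K] L →ₗ[K] L) (α : L →ₗ[K] L)
    (mult : ∀ x y : L, α (m x y) = m (α x) (α y))
    (leib : ∀ x y z : L, m (α x) (m y z) = m (m x y) (α z) + m (α y) (m x z))
    (t : L → L → L → L) (ht : ∀ x y z, t x y z = - m (m x y) (α z)) :
    ∀ x y u v w : L,
      t (α (α x)) (α (α y)) (t u v w) =
        t (t x y u) (α (α v)) (α (α w)) + t (α (α u)) (t x y v) (α (α w)) +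
          t (α (α u)) (α (α v)) (t x y w) := by
  intro x y u v w
  have h1 := leib (m (α x) (α y)) (m (α u) (α v)) (α (α w))
  have h2 := leib (m x y) (α u) (α v)
  simp only [ht, map_neg, LinearMap.neg_apply, neg_neg, mult] at h1 h2 ⊢
  rw [h1, h2, map_add, LinearMap.add_apply]
end

section
/- Every multiplicative left Hom-Leibniz algebra (L, ·, α) carries a natural Hom-Lie-Yamaguti structure: with [x,y] := x·y − y·x and {x,y,z} := −(x·y)·α(z), the quadruple (L, [,], {,,}, α) satisfies all axioms (HLY1)–(HLY8) of a Hom-Lie-Yamaguti algebra. -/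
private theorem liftL {K L : Type*} [CommSemiring K] [AddCommMonoid L] [Module K L]
    (m : L →ₗ[K] L →ₗ[K] L) (d : L) {x y : L} (h : x = y) : m d x = m d y := by rw [h]

private theorem liftR {K L : Type*} [CommSemiring K] [AddCommMonoid L] [Module K L]
    (m : L →ₗ[K] L →ₗ[K] L) (d : L) {x y : L} (h : x = y) : m x d = m y d := by rw [h]

/-- Every multiplicative left Hom-Leibniz algebra carries a natural
    Hom-Lie-Yamaguti structure (axioms HLY1–HLY8). -/
theorem stmt_9 {K L : Type*} [Field K] [CharZero K] [AddCommGroup L] [Module K L]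
    (m : L →ₗ[K] L →ₗ[K] L) (α : L →ₗ[K] L)
    (mult : ∀ x y : L, α (m x y) = m (α x) (α y))
    (leib : ∀ x y z : L, m (α x) (m y z) = m (m x y) (α z) + m (α y) (m x z))
    (b : L → L → L) (hb : ∀ x y, b x y = m x y - m y x)
    (t : L → L → L → L) (ht : ∀ x y z, t x y z = - m (m x y) (α z)) :
    (∀ x y : L, α (b x y) = b (α x) (α y)) ∧
    (∀ x y z : L, α (t x y z) = t (α x) (α y) (α z)) ∧
    (∀ x y : L, b x y = - b y x) ∧
    (∀ x y z : L, t x y z = - t y x z) ∧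
    (∀ x y z : L,
      (b (b x y) (α z) + t x y z) + (b (b y z) (α x) + t y z x) +
        (b (b z x) (α y) + t z x y) = 0) ∧
    (∀ x y z u : L,
      t (b x y) (α z) (α u) + t (b y z) (α x) (α u) + t (b z x) (α y) (α u) = 0) ∧
    (∀ x y u v : L,
      t (α x) (α y) (b u v) = b (t x y u) (α (α v)) + b (α (α u)) (t x y v)) ∧
    (∀ x y u v w : L,
      t (α (α x)) (α (α y)) (t u v w) =
        t (t x y u) (α (α v)) (α (α w)) + t (α (α u)) (t x y v) (α (α w)) +
          t (α (α u)) (α (α v)) (t x y w)) := by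
  refine ⟨?_, ?_, ?_, ?_, ?_, ?_, ?_, ?_⟩
  · intro x y
    simp only [hb, map_sub, mult]
  · intro x y z
    simp only [ht, map_neg, mult, neg_inj]
  · intro x y
    rw [hb x y, hb y x]
    abel
  · intro x y z
    simp only [hb, ht, map_sub, map_neg, map_add, LinearMap.sub_apply,
      LinearMap.neg_apply, LinearMap.add_apply, mult]
    have h0 := leib x y z
    have h1 := leib y x z
    linear_combination (norm := module) h0 +
      h1
  · intro x y z
    simp only [hb, ht, map_sub, map_neg, map_add, LinearMap.sub_apply,
      LinearMap.neg_apply, LinearMap.add_apply, mult]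
    have h0 := leib x z y
    have h1 := leib y x z
    have h2 := leib z y x
    linear_combination (norm := module) h0 +
      h1 +
      h2
  · intro x y z u
    simp only [hb, ht, map_sub, map_neg, map_add, LinearMap.sub_apply,
      LinearMap.neg_apply, LinearMap.add_apply, mult]
    have h0 := liftL m (α (α x)) (leib y z u)
    simp only [mult, map_add, LinearMap.add_apply] at h0
    have h1 := liftL m (α (α x)) (leib z y u)
    simp only [mult, map_add, LinearMap.add_apply] at h1
    have h2 := liftL m (α (α y)) (leib x z u)
    simp only [mult, map_add, LinearMap.add_apply] at h2
    have h3 := liftL m (α (α y)) (leib z x u)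
    simp only [mult, map_add, LinearMap.add_apply] at h3
    have h4 := liftL m (α (α z)) (leib x y u)
    simp only [mult, map_add, LinearMap.add_apply] at h4
    have h5 := liftL m (α (α z)) (leib y x u)
    simp only [mult, map_add, LinearMap.add_apply] at h5
    have h6 := liftR m (α (α u)) (leib x y z)
    simp only [mult, map_add, LinearMap.add_apply] at h6
    have h7 := liftR m (α (α u)) (leib x z y)
    simp only [mult, map_add, LinearMap.add_apply] at h7
    have h8 := liftR m (α (α u)) (leib y x z)
    simp only [mult, map_add, LinearMap.add_apply] at h8
    have h9 := liftR m (α (α u)) (leib y z x)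
    simp only [mult, map_add, LinearMap.add_apply] at h9
    have h10 := liftR m (α (α u)) (leib z x y)
    simp only [mult, map_add, LinearMap.add_apply] at h10
    have h11 := liftR m (α (α u)) (leib z y x)
    simp only [mult, map_add, LinearMap.add_apply] at h11
    have h12 := leib (α x) (α y) (m z u)
    simp only [mult, map_add, LinearMap.add_apply] at h12
    have h13 := leib (α x) (α z) (m y u)
    simp only [mult, map_add, LinearMap.add_apply] at h13
    have h14 := leib (α x) (m y z) (α u)
    simp only [mult, map_add, LinearMap.add_apply] at h14
    have h15 := leib (α x) (m z y) (α u)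
    simp only [mult, map_add, LinearMap.add_apply] at h15
    have h16 := leib (α y) (α x) (m z u)
    simp only [mult, map_add, LinearMap.add_apply] at h16
    have h17 := leib (α y) (α z) (m x u)
    simp only [mult, map_add, LinearMap.add_apply] at h17
    have h18 := leib (α y) (m x z) (α u)
    simp only [mult, map_add, LinearMap.add_apply] at h18
    have h19 := leib (α y) (m z x) (α u)
    simp only [mult, map_add, LinearMap.add_apply] at h19
    have h20 := leib (α z) (α x) (m y u)
    simp only [mult, map_add, LinearMap.add_apply] at h20
    have h21 := leib (α z) (α y) (m x u)
    simp only [mult, map_add, LinearMap.add_apply] at h21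
    have h22 := leib (α z) (m x y) (α u)
    simp only [mult, map_add, LinearMap.add_apply] at h22
    have h23 := leib (α z) (m y x) (α u)
    simp only [mult, map_add, LinearMap.add_apply] at h23
    linear_combination (norm := module) (2 : K) • h0 +
      (-2 : K) • h1 +
      (-2 : K) • h2 +
      (2 : K) • h3 +
      (2 : K) • h4 +
      (-2 : K) • h5 +
      h6 +
      (-1 : K) • h7 +
      (-1 : K) • h8 +
      h9 +
      h10 +
      (-1 : K) • h11 +
      (-2 : K) • h12 +
      (2 : K) • h13 +
      (2 : K) • h14 +
      (-2 : K) • h15 +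
      (2 : K) • h16 +
      (-2 : K) • h17 +
      (-2 : K) • h18 +
      (2 : K) • h19 +
      (-2 : K) • h20 +
      (2 : K) • h21 +
      (2 : K) • h22 +
      (-2 : K) • h23
  · intro x y u v
    simp only [hb, ht, map_sub, map_neg, map_add, LinearMap.sub_apply,
      LinearMap.neg_apply, LinearMap.add_apply, mult]
    have h0 := leib (m x y) (α u) (α v)
    simp only [mult, map_add, LinearMap.add_apply] at h0
    have h1 := leib (m x y) (α v) (α u)
    simp only [mult, map_add, LinearMap.add_apply] at h1
    linear_combination (norm := module) (-1 : K) • h0 +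
      h1
  · intro x y u v w
    simp only [hb, ht, map_sub, map_neg, map_add, LinearMap.sub_apply,
      LinearMap.neg_apply, LinearMap.add_apply, mult]
    have h0 := liftL m (α (α (α x))) (liftL m (α (α y)) (leib u v w))
    simp only [mult, map_add, LinearMap.add_apply] at h0
    have h1 := liftL m (α (α (α x))) (leib (α y) (m u v) (α w))
    simp only [mult, map_add, LinearMap.add_apply] at h1
    have h2 := liftL m (α (α (α y))) (liftL m (α (α x)) (leib u v w))
    simp only [mult, map_add, LinearMap.add_apply] at h2
    have h3 := liftL m (α (α (α y))) (leib (α x) (m u v) (α w))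
    simp only [mult, map_add, LinearMap.add_apply] at h3
    have h4 := liftL m (m (α (α u)) (α (α v))) (leib (α x) (α y) (α w))
    simp only [mult, map_add, LinearMap.add_apply] at h4
    have h5 := liftL m (m (α (α x)) (α (α y))) (leib (α u) (α v) (α w))
    simp only [mult, map_add, LinearMap.add_apply] at h5
    have h6 := liftR m (α (α (α w))) (liftL m (α (α u)) (leib x y v))
    simp only [mult, map_add, LinearMap.add_apply] at h6
    have h7 := liftR m (α (α (α w))) (liftL m (α (α x)) (leib y u v))
    simp only [mult, map_add, LinearMap.add_apply] at h7
    have h8 := liftR m (α (α (α w))) (liftL m (α (α y)) (leib x u v))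
    simp only [mult, map_add, LinearMap.add_apply] at h8
    have h9 := liftR m (α (α (α w))) (liftR m (α (α v)) (leib x y u))
    simp only [mult, map_add, LinearMap.add_apply] at h9
    have h10 := liftR m (α (α (α w))) (leib (α x) (α u) (m y v))
    simp only [mult, map_add, LinearMap.add_apply] at h10
    have h11 := liftR m (α (α (α w))) (leib (α x) (m y u) (α v))
    simp only [mult, map_add, LinearMap.add_apply] at h11
    have h12 := liftR m (α (α (α w))) (leib (α y) (α u) (m x v))
    simp only [mult, map_add, LinearMap.add_apply] at h12
    have h13 := liftR m (α (α (α w))) (leib (α y) (m x u) (α v))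
    simp only [mult, map_add, LinearMap.add_apply] at h13
    have h14 := leib (α (α x)) (α (α y)) (m (α u) (m v w))
    simp only [mult, map_add, LinearMap.add_apply] at h14
    have h15 := leib (α (α x)) (α (α y)) (m (α v) (m u w))
    simp only [mult, map_add, LinearMap.add_apply] at h15
    have h16 := leib (α (α x)) (m (α u) (α v)) (m (α y) (α w))
    simp only [mult, map_add, LinearMap.add_apply] at h16
    have h17 := leib (α (α x)) (m (α y) (m u v)) (α (α w))
    simp only [mult, map_add, LinearMap.add_apply] at h17
    have h18 := leib (α (α y)) (m (α u) (α v)) (m (α x) (α w))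
    simp only [mult, map_add, LinearMap.add_apply] at h18
    have h19 := leib (α (α y)) (m (α x) (m u v)) (α (α w))
    simp only [mult, map_add, LinearMap.add_apply] at h19
    linear_combination (norm := module) h0 +
      h1 +
      (-1 : K) • h2 +
      (-1 : K) • h3 +
      h4 +
      (-1 : K) • h5 +
      h6 +
      h7 +
      (-1 : K) • h8 +
      h9 +
      h10 +
      h11 +
      (-1 : K) • h12 +
      (-1 : K) • h13 +
      (-1 : K) • h14 +
      h15 +
      h16 +
      h17 +
      (-1 : K) • h18 +
      (-1 : K) • h19
end

section
/- Every left Leibniz algebra (L, ·) has a natural Lie-Yamaguti structure: with [x,y] := x·y − y·x and {x,y,z} := −(x·y)·z, the triple (L, [,], {,,}) is a Lie-Yamaguti algebra. -/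
/-- Every left Leibniz algebra has a natural Lie-Yamaguti structure with
    [x,y] := x·y − y·x and {x,y,z} := −(x·y)·z. -/
theorem stmt_12 {K L : Type*} [Field K] [CharZero K] [AddCommGroup L] [Module K L]
    (m : L →ₗ[K] L →ₗ[K] L)
    (leib : ∀ x y z : L, m x (m y z) = m (m x y) z + m y (m x z))
    (b : L → L → L) (hb : ∀ x y, b x y = m x y - m y x)
    (t : L → L → L → L) (ht : ∀ x y z, t x y z = - m (m x y) z) :
    (∀ x y : L, b x y = - b y x) ∧
    (∀ x y z : L, t x y z = - t y x z) ∧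
    (∀ x y z : L,
      (b (b x y) z + t x y z) + (b (b y z) x + t y z x) + (b (b z x) y + t z x y) = 0) ∧
    (∀ x y z u : L, t (b x y) z u + t (b y z) x u + t (b z x) y u = 0) ∧
    (∀ x y u v : L, t x y (b u v) = b (t x y u) v + b u (t x y v)) ∧
    (∀ x y u v w : L,
      t x y (t u v w) = t (t x y u) v w + t u (t x y v) w + t u v (t x y w)) := by
  have hB : ∀ x y z : L, m (m x y) z = m x (m y z) - m y (m x z) := by
    intro x y z
    rw [leib x y z]; abel
  refine ⟨fun x y => ?_, fun x y z => ?_, fun x y z => ?_, fun x y z u => ?_,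
    fun x y u v => ?_, fun x y u v w => ?_⟩ <;>
    simp only [hb, ht, map_sub, map_add, map_neg, LinearMap.sub_apply, LinearMap.add_apply,
      LinearMap.neg_apply, hB] <;> abel
end

section
/- Let (L, ·, α) be a multiplicative Hom-algebra and define [x,y] := x·y − y·x and the ternary Hom-associator bracket [x,y,z] := (x·y)·α(z) − α(x)·(y·z). Then (L, [,], [,,], α) is a Hom-Akivis algebra, i.e. the Hom-Akivis identity ∑_{cyclic x,y,z} [[x,y],α(z)] = ∑_{cyclic x,y,z} [x,y,z] − ∑_{cyclic x,y,z} [y,x,z] holds. -/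
/-- Every multiplicative Hom-algebra is a Hom-Akivis algebra with respect to the
    skew-symmetrization and the Hom-associator. -/
theorem stmt_18 {K L : Type*} [Field K] [CharZero K] [AddCommGroup L] [Module K L]
    (m : L →ₗ[K] L →ₗ[K] L) (α : L →ₗ[K] L)
    (mult : ∀ x y : L, α (m x y) = m (α x) (α y))
    (b : L → L → L) (hb : ∀ x y, b x y = m x y - m y x)
    (t : L → L → L → L) (ht : ∀ x y z, t x y z = m (m x y) (α z) - m (α x) (m y z)) :
    ∀ x y z : L,
      b (b x y) (α z) + b (b y z) (α x) + b (b z x) (α y) =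
        (t x y z + t y z x + t z x y) - (t y x z + t z y x + t x z y) := by
  intro x y z; simp only [hb, ht, mult, map_sub, LinearMap.sub_apply]; abel
end

section
/- In a multiplicative left Hom-Leibniz algebra (L, ·, α), with [x,y] := x·y − y·x, the cyclic identity ∑_{cyclic x,y,z} [[x,y],α(z)] = ∑_{cyclic x,y,z} (x·y)·α(z) holds for all x, y, z in L. -/
/-- Cyclic identity ∑ [[x,y],α(z)] = ∑ (x·y)·α(z) in a multiplicative
    left Hom-Leibniz algebra. -/
theorem stmt_19 {K L : Type*} [Field K] [CharZero K] [AddCommGroup L] [Module K L]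
    (m : L →ₗ[K] L →ₗ[K] L) (α : L →ₗ[K] L)
    (mult : ∀ x y : L, α (m x y) = m (α x) (α y))
    (leib : ∀ x y z : L, m (α x) (m y z) = m (m x y) (α z) + m (α y) (m x z))
    (b : L → L → L) (hb : ∀ x y, b x y = m x y - m y x) :
    ∀ x y z : L,
      b (b x y) (α z) + b (b y z) (α x) + b (b z x) (α y) =
        m (m x y) (α z) + m (m y z) (α x) + m (m z x) (α y) := by
  intro x y z
  simp only [hb, map_sub, LinearMap.sub_apply]
  linear_combination (norm := module) (leib z y x) + (leib x z y) + (leib y x z)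
end
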